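/- Let A ⊆ ℝ^d be a nonempty finite set with mean μ = (1/|A|)∑_{x∈A} x, and let S ⊆ ℝ^d be a nonempty finite set of centers with φ_A(S) ≥ 64·φ_A({μ}). Let T ≥ (7/3)·φ_{{μ}}(S) be any threshold. Then ∑_{x∈A} min{φ_{{x}}(S), T} ≥ φ_A(S)/8. -/

import Mathlib

/-! Since `‖x - s‖² ≤ 2‖x - μ‖² + 2‖μ - s‖²`, every point satisfies
`φ_{x}(S) ≤ 2‖x - μ‖² + 2φ_{μ}(S)`. Hence truncating at any `T ≥ 2φ_{μ}(S)` loses at most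
`2‖x - μ‖²` per point, i.e. at most `2φ_A({μ}) ≤ φ_A(S)/32` in total. -/

open Finset

open scoped Classical

/-- `phiPt x S` is the squared distance from `x` to its nearest center in `S`,
i.e. `min_{s ∈ S} ‖x - s‖²`. -/
noncomputable def phiPt {d : ℕ} (x : EuclideanSpace ℝ (Fin d))
    (S : Finset (EuclideanSpace ℝ (Fin d))) : ℝ :=
  sInf ((fun s => ‖x - s‖ ^ 2) '' (S : Set (EuclideanSpace ℝ (Fin d))))

/-- `phi A S = ∑_{x ∈ A} min_{s ∈ S} ‖x - s‖²`, the `k`-means cost of centers `S` on `A`. -/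
noncomputable def phi {d : ℕ} (A S : Finset (EuclideanSpace ℝ (Fin d))) : ℝ :=
  ∑ x ∈ A, phiPt x S

/-- The mean (centroid) of a finite set of points. -/
noncomputable def mean {d : ℕ} (A : Finset (EuclideanSpace ℝ (Fin d))) :
    EuclideanSpace ℝ (Fin d) :=
  (A.card : ℝ)⁻¹ • ∑ x ∈ A, x

/-- `rho X S z` is the cost of the centers `S` on `X` after discarding the `z`
points of `X` farthest from `S`: the minimum of `phi Y S` over `Y ⊆ X` with
`|Y| = |X| - z`. -/
noncomputable def rho {d : ℕ} (X S : Finset (EuclideanSpace ℝ (Fin d))) (z : ℕ) : ℝ :=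
  sInf ((fun Y : Finset (EuclideanSpace ℝ (Fin d)) => phi Y S) ''
    {Y : Finset (EuclideanSpace ℝ (Fin d)) | Y ⊆ X ∧ Y.card = X.card - z})

variable {d : ℕ}

lemma phiPt_nonneg (x : EuclideanSpace ℝ (Fin d)) (S : Finset (EuclideanSpace ℝ (Fin d))) :
    0 ≤ phiPt x S :=
  Real.sInf_nonneg (by rintro _ ⟨s, -, rfl⟩; positivity)

lemma phiPt_le_of_mem {x s : EuclideanSpace ℝ (Fin d)} {S : Finset (EuclideanSpace ℝ (Fin d))}
    (hs : s ∈ S) : phiPt x S ≤ ‖x - s‖ ^ 2 :=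
  csInf_le ⟨0, by rintro _ ⟨t, -, rfl⟩; positivity⟩ ⟨s, hs, rfl⟩

lemma exists_phiPt_eq (x : EuclideanSpace ℝ (Fin d)) {S : Finset (EuclideanSpace ℝ (Fin d))}
    (hS : S.Nonempty) : ∃ s ∈ S, phiPt x S = ‖x - s‖ ^ 2 := by
  obtain ⟨s, hs, hval⟩ := (((Finset.coe_nonempty.mpr hS).image _).csInf_mem
    ((S.finite_toSet).image fun s => ‖x - s‖ ^ 2))
  exact ⟨s, hs, hval.symm⟩

lemma phiPt_singleton (x m : EuclideanSpace ℝ (Fin d)) : phiPt x {m} = ‖x - m‖ ^ 2 := by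
  simp [phiPt]

lemma phi_singleton (A : Finset (EuclideanSpace ℝ (Fin d))) (m : EuclideanSpace ℝ (Fin d)) :
    phi A {m} = ∑ x ∈ A, ‖x - m‖ ^ 2 :=
  sum_congr rfl fun x _ => phiPt_singleton x m

lemma phi_nonneg (A S : Finset (EuclideanSpace ℝ (Fin d))) : 0 ≤ phi A S :=
  sum_nonneg fun x _ => phiPt_nonneg x S

lemma phiPt_le_two_mul_add (x y : EuclideanSpace ℝ (Fin d))
    (S : Finset (EuclideanSpace ℝ (Fin d))) :
    phiPt x S ≤ 2 * ‖x - y‖ ^ 2 + 2 * phiPt y S := by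
  rcases S.eq_empty_or_nonempty with rfl | hS
  · simp [phiPt]
  obtain ⟨s, hs, hys⟩ := exists_phiPt_eq y hS
  calc phiPt x S ≤ ‖x - s‖ ^ 2 := phiPt_le_of_mem hs
    _ ≤ (‖x - y‖ + ‖y - s‖) ^ 2 := by
        gcongr
        exact norm_sub_le_norm_sub_add_norm_sub x y s
    _ ≤ 2 * ‖x - y‖ ^ 2 + 2 * phiPt y S := by
        rw [hys]; linarith [add_sq_le (a := ‖x - y‖) (b := ‖y - s‖)]

lemma phiPt_sub_le_min {y : EuclideanSpace ℝ (Fin d)} {S : Finset (EuclideanSpace ℝ (Fin d))}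
    {T : ℝ} (hT : 2 * phiPt y S ≤ T) (x : EuclideanSpace ℝ (Fin d)) :
    phiPt x S - 2 * ‖x - y‖ ^ 2 ≤ min (phiPt x S) T :=
  le_min (by linarith [sq_nonneg ‖x - y‖]) (by linarith [phiPt_le_two_mul_add x y S])

lemma phi_sub_le_sum_min {y : EuclideanSpace ℝ (Fin d)} {S : Finset (EuclideanSpace ℝ (Fin d))}
    {T : ℝ} (hT : 2 * phiPt y S ≤ T) (A : Finset (EuclideanSpace ℝ (Fin d))) :
    phi A S - 2 * phi A {y} ≤ ∑ x ∈ A, min (phiPt x S) T := by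
  rw [phi_singleton, mul_sum, phi, ← sum_sub_distrib]
  exact sum_le_sum fun x _ => phiPt_sub_le_min hT x

theorem stmt9_general {d : ℕ} (A S : Finset (EuclideanSpace ℝ (Fin d)))
    (h : phi A S ≥ 64 * phi A {mean A})
    (T : ℝ) (hT : T ≥ (7 / 3) * phiPt (mean A) S) :
    ∑ x ∈ A, min (phiPt x S) T ≥ phi A S / 8 := by
  have hT' : 2 * phiPt (mean A) S ≤ T := by linarith [phiPt_nonneg (mean A) S]
  linarith [phi_sub_le_sum_min hT' A, phi_nonneg A S]

/-- If `φ_A(S) ≥ 64·φ_A({μ})` and `T ≥ (7/3)·φ_{{μ}}(S)`, then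
`∑_{x ∈ A} min{φ_{{x}}(S), T} ≥ φ_A(S)/8`. -/
theorem stmt9 {d : ℕ} (A S : Finset (EuclideanSpace ℝ (Fin d)))
    (hA : A.Nonempty) (hS : S.Nonempty)
    (h : phi A S ≥ 64 * phi A {mean A})
    (T : ℝ) (hT : T ≥ (7 / 3) * phiPt (mean A) S) :
    ∑ x ∈ A, min (phiPt x S) T ≥ phi A S / 8 :=
  stmt9_general A S h T hT
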